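/- arXiv:2003.12574 — 3 statements merged into one kernel-verified Lean document; each statement's English description precedes it below -/
import Mathlib

section
/- If a Riemannian manifold (M,g) is an almost η-Ricci soliton (V, a, δ) whose potential vector field V = grad(σ) is torse-forming with ∇_X V = a X + δ dσ(X) V for a smooth function σ on M, and η = dσ is the g-dual 1-form of V (i.e. the soliton functions are λ = a and μ = δ), then M is a Ricci-flat manifold. -/
/-!
Abstract model of the geometric data of an `n`-dimensional Riemannian manifold:
`M` is the set of points, `VF` is the space of (smooth) vector fields, and smooth
real-valued functions on `M` are modelled as elements of `M → ℝ`.  The structure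
records the metric, the directional derivative, the Lie bracket, the Levi-Civita
connection, the Ricci tensor, the scalar curvature and a pointwise orthonormal
frame, together with their standard defining properties.
-/
structure RiemannianSetting (n : ℕ) (M : Type) (VF : Type)
    [AddCommGroup VF] [Module ℝ VF] : Type where
  /-- multiplication of a vector field by a smooth function -/
  fsmul : (M → ℝ) → VF → VF
  /-- derivative of a function in the direction of a vector field -/
  dd : VF → (M → ℝ) → M → ℝ
  /-- the Riemannian metric -/
  g : VF → VF → M → ℝ
  /-- the Lie bracket of vector fields -/
  bracket : VF → VF → VF
  /-- the Levi-Civita connection -/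
  conn : VF → VF → VF
  /-- the Ricci curvature tensor field -/
  ric : VF → VF → M → ℝ
  /-- the scalar curvature -/
  scal : M → ℝ
  /-- a pointwise orthonormal frame -/
  frame : M → Fin n → VF
  g_symm : ∀ X Y, g X Y = g Y X
  g_add_left : ∀ X Y Z, g (X + Y) Z = g X Z + g Y Z
  g_smul_left : ∀ (r : ℝ) (X Y : VF), g (r • X) Y = r • g X Y
  g_fsmul_left : ∀ f X Y, g (fsmul f X) Y = f * g X Y
  g_nonneg : ∀ X p, 0 ≤ g X X p
  fsmul_one : ∀ X, fsmul (fun _ => 1) X = X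
  fsmul_add : ∀ f X Y, fsmul f (X + Y) = fsmul f X + fsmul f Y
  fsmul_add' : ∀ f₁ f₂ X, fsmul (f₁ + f₂) X = fsmul f₁ X + fsmul f₂ X
  dd_add : ∀ X f₁ f₂, dd X (f₁ + f₂) = dd X f₁ + dd X f₂
  dd_mul : ∀ X f₁ f₂, dd X (f₁ * f₂) = dd X f₁ * f₂ + f₁ * dd X f₂
  conn_add_left : ∀ X Y Z, conn (X + Y) Z = conn X Z + conn Y Z
  conn_add_right : ∀ X Y Z, conn X (Y + Z) = conn X Y + conn X Z
  conn_fsmul_left : ∀ f X Y, conn (fsmul f X) Y = fsmul f (conn X Y)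
  conn_leibniz : ∀ f X Y, conn X (fsmul f Y) = fsmul (dd X f) Y + fsmul f (conn X Y)
  conn_metric : ∀ X Y Z, dd X (g Y Z) = g (conn X Y) Z + g Y (conn X Z)
  torsion_free : ∀ X Y, conn X Y - conn Y X = bracket X Y
  frame_orthonormal : ∀ p i j, g (frame p i) (frame p j) p = if i = j then 1 else 0
  ric_trace : ∀ X Y p, ric X Y p = ∑ i : Fin n,
      g (conn (frame p i) (conn X Y) - conn X (conn (frame p i) Y)
          - conn (bracket (frame p i) X) Y) (frame p i) p
  scal_trace : ∀ p, scal p = ∑ i : Fin n, ric (frame p i) (frame p i) p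
  ric_symm : ∀ X Y, ric X Y = ric Y X

namespace RiemannianSetting

variable {n : ℕ} {M VF : Type} [AddCommGroup VF] [Module ℝ VF]

/-- The Lie derivative of the metric along `V`:
`(£_V g)(X,Y) = g(∇_X V, Y) + g(∇_Y V, X)`. -/
def lieg (G : RiemannianSetting n M VF) (V X Y : VF) : M → ℝ :=
  G.g (G.conn X V) Y + G.g (G.conn Y V) X

/-- The `g`-dual `1`-form of a vector field `V`. -/
def dual (G : RiemannianSetting n M VF) (V X : VF) : M → ℝ := G.g V X

/-- The squared norm `|V|²` of a vector field. -/
def nsq (G : RiemannianSetting n M VF) (V : VF) : M → ℝ := G.g V V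

/-- `X` is the gradient of `f`:  `g(X, Y) = Y(f)` for every vector field `Y`. -/
def IsGradient (G : RiemannianSetting n M VF) (f : M → ℝ) (X : VF) : Prop :=
  ∀ Y, G.g X Y = G.dd Y f

/-- A nowhere vanishing vector field. -/
def NowhereZero (G : RiemannianSetting n M VF) (V : VF) : Prop := ∀ p, G.g V V p ≠ 0

/-- `(V, lam, mu)` is an almost `η`-Ricci soliton:
`(1/2) £_V g + Ric = λ g + μ η ⊗ η`. -/
def IsEtaRicciSoliton (G : RiemannianSetting n M VF) (V : VF) (lam mu : M → ℝ)
    (eta : VF → M → ℝ) : Prop :=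
  ∀ X Y, (1 / 2 : ℝ) • G.lieg V X Y + G.ric X Y = lam * G.g X Y + mu * eta X * eta Y

/-- `(V, lam)` is an almost Ricci soliton: `(1/2) £_V g + Ric = λ g`. -/
def IsRicciSoliton (G : RiemannianSetting n M VF) (V : VF) (lam : M → ℝ) : Prop :=
  ∀ X Y, (1 / 2 : ℝ) • G.lieg V X Y + G.ric X Y = lam * G.g X Y

/-- `(V, lam, mu)` is an almost `η`-Yamabe soliton:
`(1/2) £_V g = (scal − λ) g + μ η ⊗ η`. -/
def IsEtaYamabeSoliton (G : RiemannianSetting n M VF) (V : VF) (lam mu : M → ℝ)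
    (eta : VF → M → ℝ) : Prop :=
  ∀ X Y, (1 / 2 : ℝ) • G.lieg V X Y = (G.scal - lam) * G.g X Y + mu * eta X * eta Y

/-- `V` is torse-forming: `∇_X V = a X + ψ(X) V` for every vector field `X`. -/
def IsTorseForming (G : RiemannianSetting n M VF) (V : VF) (a : M → ℝ)
    (psi : VF → M → ℝ) : Prop :=
  ∀ X, G.conn X V = G.fsmul a X + G.fsmul (psi X) V

end RiemannianSetting

namespace RiemannianSetting

variable {n : ℕ} {M VF : Type} [AddCommGroup VF] [Module ℝ VF] (G : RiemannianSetting n M VF)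

theorem g_conn_of_isTorseForming {V : VF} {a : M → ℝ} {psi : VF → M → ℝ}
    (htf : G.IsTorseForming V a psi) (X Y : VF) :
    G.g (G.conn X V) Y = a * G.g X Y + psi X * G.g V Y := by
  rw [htf X, G.g_add_left, G.g_fsmul_left, G.g_fsmul_left]

theorem lieg_of_isTorseForming {V : VF} {a : M → ℝ} {psi : VF → M → ℝ}
    (htf : G.IsTorseForming V a psi) (X Y : VF) :
    G.lieg V X Y = 2 * a * G.g X Y + psi X * G.g V Y + psi Y * G.g V X := by
  rw [lieg, G.g_conn_of_isTorseForming htf, G.g_conn_of_isTorseForming htf, G.g_symm Y X]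
  ring

theorem lieg_of_isGradient_of_isTorseForming {V : VF} {a delta sigma : M → ℝ}
    (hgrad : G.IsGradient sigma V)
    (htf : G.IsTorseForming V a (fun X => delta * G.dd X sigma)) (X Y : VF) :
    G.lieg V X Y = 2 * (a * G.g X Y + delta * G.dd X sigma * G.dd Y sigma) := by
  rw [G.lieg_of_isTorseForming htf, hgrad, hgrad]
  ring

variable {G}

theorem IsEtaRicciSoliton.ric_eq_zero {V : VF} {lam mu : M → ℝ} {eta : VF → M → ℝ}
    (hsol : G.IsEtaRicciSoliton V lam mu eta)
    (hlieg : ∀ X Y, G.lieg V X Y = 2 * (lam * G.g X Y + mu * eta X * eta Y)) (X Y : VF) :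
    G.ric X Y = 0 := by
  have half_two_mul (F : M → ℝ) : (1 / 2 : ℝ) • (2 * F) = F := by
    ext p
    simp only [Pi.smul_apply, Pi.mul_apply, Pi.ofNat_apply, smul_eq_mul]
    ring
  simpa only [hlieg, half_two_mul, add_eq_left] using hsol X Y

end RiemannianSetting

/-- If a Riemannian manifold `(M,g)` is an almost `η`-Ricci soliton
`(V, a, δ)` whose potential vector field `V = grad(σ)` is torse-forming with
`∇_X V = a X + δ dσ(X) V` for a smooth function `σ` on `M`, and `η = dσ` is the
`g`-dual `1`-form of `V` (i.e. the soliton functions are `λ = a` and `μ = δ`),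
then `M` is a Ricci-flat manifold. -/
theorem ricci_flat_of_gradient_torse_forming_potential
    {n : ℕ} {M VF : Type} [AddCommGroup VF] [Module ℝ VF]
    (G : RiemannianSetting n M VF) (V : VF) (a delta sigma : M → ℝ)
    (hgrad : G.IsGradient sigma V)
    (htf : ∀ X : VF, G.conn X V = G.fsmul a X + G.fsmul (delta * G.dd X sigma) V)
    (hsol : G.IsEtaRicciSoliton V a delta (fun X => G.dd X sigma)) :
    ∀ X Y : VF, G.ric X Y = 0 :=
  hsol.ric_eq_zero (G.lieg_of_isGradient_of_isTorseForming hgrad htf)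
end

section
/- Let (M,g) be an n-dimensional Riemannian manifold, let V be a nowhere vanishing torse-forming vector field on M with ∇_X V = a X + ψ(X) V, let η be the g-dual 1-form of V and let U be the g-dual vector field of ψ. If (V,λ,μ) is an almost η-Yamabe soliton on (M,g), then either μ = 0, in which case (V,λ) is an almost Yamabe soliton with λ = scal − V(|V|²)/(2|V|²), or (ψ(V))² = |V|²·|U|². -/
/-!
For a torse-forming `V`, `£_V g = 2a g + ψ ⊗ η + η ⊗ ψ`. Evaluating the soliton equation on
`(X, V)` and on `(V, V)` and eliminating `scal − λ` and `μ` leaves `|V|² ψ = ψ(V) η`, so `ψ` is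
proportional to `η`; at `X = U` this reads `|V|² |U|² = ψ(V)²`.
-/

namespace RiemannianSetting

variable {n : ℕ} {M VF : Type} [AddCommGroup VF] [Module ℝ VF]
  (G : RiemannianSetting n M VF) {V : VF} {a : M → ℝ} {psi : VF → M → ℝ}

theorem g_conn_eq_of_isTorseForming (htf : G.IsTorseForming V a psi) (X Y : VF) :
    G.g (G.conn X V) Y = a * G.g X Y + psi X * G.g V Y := by
  rw [htf X, G.g_add_left, G.g_fsmul_left, G.g_fsmul_left]

theorem lieg_eq_of_isTorseForming (htf : G.IsTorseForming V a psi) (X Y : VF) :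
    G.lieg V X Y = 2 * a * G.g X Y + psi X * G.dual V Y + psi Y * G.dual V X := by
  rw [lieg, G.g_conn_eq_of_isTorseForming htf, G.g_conn_eq_of_isTorseForming htf,
    G.g_symm Y X]
  simp only [dual]
  ring

theorem nsq_mul_psi_eq_of_isEtaYamabeSoliton {lam mu : M → ℝ} (hV : G.NowhereZero V)
    (htf : G.IsTorseForming V a psi) (hsol : G.IsEtaYamabeSoliton V lam mu (G.dual V))
    (X : VF) : G.nsq V * psi X = psi V * G.dual V X := by
  funext p
  have hXV := congrFun (hsol X V) p
  have hVV := congrFun (hsol V V) p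
  rw [G.lieg_eq_of_isTorseForming htf, G.g_symm X V] at hXV
  rw [G.lieg_eq_of_isTorseForming htf] at hVV
  simp only [dual, nsq, Pi.add_apply, Pi.mul_apply, Pi.sub_apply, Pi.smul_apply,
    Pi.ofNat_apply, smul_eq_mul] at hXV hVV ⊢
  have h : G.g V V p * (G.g V V p * psi X p - psi V p * G.g V X p) = 0 := by
    linear_combination 2 * G.g V V p * hXV - 2 * G.g V X p * hVV
  linear_combination (mul_eq_zero.mp h).resolve_left (hV p)

end RiemannianSetting

/-- Let `(M,g)` be an `n`-dimensional Riemannian manifold, `V` a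
nowhere vanishing torse-forming vector field, `∇_X V = a X + ψ(X) V`, `η` the
`g`-dual `1`-form of `V` and `U` the `g`-dual vector field of `ψ`.  If `(V, λ, μ)`
is an almost `η`-Yamabe soliton on `(M,g)`, then either `μ = 0`, in which case
`(V, λ)` is an almost Yamabe soliton with `λ = scal − V(|V|²)/(2|V|²)`, or
`(ψ(V))² = |V|² |U|²`. -/
theorem almost_eta_yamabe_soliton_torse_forming_dichotomy
    {n : ℕ} {M VF : Type} [AddCommGroup VF] [Module ℝ VF]
    (G : RiemannianSetting n M VF) (V U : VF) (lam mu a : M → ℝ)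
    (psi : VF → M → ℝ)
    (hV : G.NowhereZero V)
    (htf : G.IsTorseForming V a psi)
    (hU : ∀ X, G.g U X = psi X)
    (hsol : G.IsEtaYamabeSoliton V lam mu (G.dual V)) :
    ((∀ p, mu p = 0) ∧
      (∀ p, lam p = G.scal p - G.dd V (G.nsq V) p / (2 * G.nsq V p))) ∨
    (∀ p, (psi V p) ^ 2 = G.nsq V p * G.nsq U p) := by
  right
  intro p
  have hprop := congrFun (G.nsq_mul_psi_eq_of_isEtaYamabeSoliton hV htf hsol U) p
  have hUV : G.dual V U = psi V := by rw [RiemannianSetting.dual, G.g_symm, hU]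
  have hUU : psi U = G.nsq U := (hU U).symm
  rw [hUV, hUU] at hprop
  simp only [Pi.mul_apply] at hprop
  linear_combination -hprop
end

section
/- Let M be a submanifold isometrically immersed into a Riemannian manifold (M̃,g̃) with induced metric g and second fundamental form h, let V be a torse-forming vector field on M̃ with ∇̃_X V = a X + ψ(X) V, and let η be the g-dual 1-form of the tangential component V^T of V. Then (M,g) is an almost η-Yamabe soliton (V^T,λ,μ) if and only if (scal − λ − a) g(X,Y) − g̃(h(X,Y), V^⊥) + μ η(X)η(Y) − (1/2)[ψ(X)η(Y) + η(X)ψ(Y)] = 0 for all vector fields X, Y tangent to M, where scal is the scalar curvature of (M,g). -/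
/-- Abstract data of a submanifold `M` isometrically immersed into a Riemannian
manifold `(M̃, g̃)`:  `VF` is the space of vector fields tangent to `M`, `W` is the
space of vector fields of `M̃` restricted along `M`, `gt` is the ambient metric,
`incl` the inclusion of tangent fields, `tang` the tangential projection, `Dconn`
the ambient Levi-Civita connection along tangent directions, and `sff` the second
fundamental form (the Gauss formula `∇̃_X Y = ∇_X Y + h(X,Y)` holds). -/
structure SubmanifoldSetting (n : ℕ) (M : Type) (VF W : Type)
    [AddCommGroup VF] [Module ℝ VF] [AddCommGroup W] [Module ℝ W] extends
    RiemannianSetting n M VF where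
  /-- the ambient metric along `M` -/
  gt : W → W → M → ℝ
  /-- multiplication of an ambient field by a function -/
  fsmulW : (M → ℝ) → W → W
  /-- inclusion of tangent vector fields into ambient vector fields -/
  incl : VF →ₗ[ℝ] W
  /-- tangential projection -/
  tang : W →ₗ[ℝ] VF
  /-- the ambient Levi-Civita connection along tangent directions of `M` -/
  Dconn : VF → W → W
  /-- the second fundamental form `h` -/
  sff : VF → VF → W
  gt_symm : ∀ v w, gt v w = gt w v
  gt_add_left : ∀ u v w, gt (u + v) w = gt u w + gt v w
  gt_fsmul_left : ∀ f v w, gt (fsmulW f v) w = f * gt v w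
  /-- the metric of `M` is induced by the ambient metric -/
  g_induced : ∀ X Y, g X Y = gt (incl X) (incl Y)
  tang_incl : ∀ X, tang (incl X) = X
  /-- the normal component `w − (tang w)` is `g̃`-orthogonal to `M` -/
  tang_proj : ∀ w X, gt (w - incl (tang w)) (incl X) = 0
  /-- the Gauss formula `∇̃_X Y = ∇_X Y + h(X, Y)` -/
  gauss : ∀ X Y, Dconn X (incl Y) = incl (conn X Y) + sff X Y
  sff_symm : ∀ X Y, sff X Y = sff Y X
  /-- the second fundamental form is normal-valued -/
  sff_normal : ∀ X Y Z, gt (sff X Y) (incl Z) = 0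
  Dconn_add : ∀ X v w, Dconn X (v + w) = Dconn X v + Dconn X w
  Dconn_metric : ∀ X v w, dd X (gt v w) = gt (Dconn X v) w + gt v (Dconn X w)

namespace SubmanifoldSetting

variable {n : ℕ} {M VF W : Type} [AddCommGroup VF] [Module ℝ VF]
  [AddCommGroup W] [Module ℝ W]

/-- the normal component `V^⊥` of an ambient vector field along `M` -/
def nor (S : SubmanifoldSetting n M VF W) (w : W) : W := w - S.incl (S.tang w)

end SubmanifoldSetting

/-!
Write `V = Vᵀ + V^⊥`. By the Gauss formula and the Weingarten identity
`g̃(∇̃_X V^⊥, Y) = -g̃(h(X,Y), V^⊥)`, the tangential part of `∇̃_X V` is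
`∇_X Vᵀ` up to the normal term `g̃(h(X,Y), V^⊥)`, so
`g(∇_X Vᵀ, Y) = a g(X,Y) + ψ(X) η(Y) + g̃(h(X,Y), V^⊥)` for torse-forming `V`.
Symmetrising gives `(1/2) £_{Vᵀ} g`, and the soliton equation becomes the stated identity.
-/

namespace RiemannianSetting

variable {n : ℕ} {M VF : Type} [AddCommGroup VF] [Module ℝ VF]

theorem dd_zero (G : RiemannianSetting n M VF) (X : VF) : G.dd X 0 = 0 := by
  have h := G.dd_add X 0 0
  rw [add_zero] at h
  exact left_eq_add.mp h

end RiemannianSetting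

namespace SubmanifoldSetting

variable {n : ℕ} {M VF W : Type} [AddCommGroup VF] [Module ℝ VF]
  [AddCommGroup W] [Module ℝ W] (S : SubmanifoldSetting n M VF W)

theorem gt_add_right (u v w : W) : S.gt u (v + w) = S.gt u v + S.gt u w := by
  rw [S.gt_symm, S.gt_add_left, S.gt_symm v, S.gt_symm w]

theorem gt_sub_left (u v w : W) : S.gt (u - v) w = S.gt u w - S.gt v w :=
  eq_sub_of_add_eq (by rw [← S.gt_add_left, sub_add_cancel])

theorem incl_tang_add_nor (w : W) : S.incl (S.tang w) + S.nor w = w :=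
  add_sub_cancel _ w

theorem gt_nor_incl (w : W) (X : VF) : S.gt (S.nor w) (S.incl X) = 0 :=
  S.tang_proj w X

theorem gt_incl_eq_g_tang (w : W) (Y : VF) : S.gt w (S.incl Y) = S.g (S.tang w) Y := by
  conv_lhs => rw [← S.incl_tang_add_nor w]
  rw [S.gt_add_left, S.gt_nor_incl, add_zero, S.g_induced]

theorem gt_Dconn_nor_incl (X Y : VF) (w : W) :
    S.gt (S.Dconn X (S.nor w)) (S.incl Y) = -S.gt (S.sff X Y) (S.nor w) := by
  have h := S.Dconn_metric X (S.nor w) (S.incl Y)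
  rw [S.gt_nor_incl, S.dd_zero, S.gauss, S.gt_add_right, S.gt_nor_incl, zero_add,
    S.gt_symm (S.nor w)] at h
  exact eq_neg_of_add_eq_zero_left h.symm

theorem g_conn_tang (X Y : VF) (w : W) :
    S.g (S.conn X (S.tang w)) Y
      = S.gt (S.Dconn X w) (S.incl Y) + S.gt (S.sff X Y) (S.nor w) := by
  have hsplit : S.Dconn X (S.incl (S.tang w)) = S.Dconn X w - S.Dconn X (S.nor w) :=
    eq_sub_of_add_eq (by rw [← S.Dconn_add, S.incl_tang_add_nor])
  have hgauss := congrArg (S.gt · (S.incl Y)) (S.gauss X (S.tang w))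
  simp only [S.gt_add_left, S.sff_normal, add_zero, hsplit, S.gt_sub_left,
    S.gt_Dconn_nor_incl] at hgauss
  rw [S.g_induced, ← hgauss, sub_neg_eq_add]

section TorseForming

variable {V : W} {a : M → ℝ} {psi : VF → M → ℝ}

theorem g_conn_tang_of_torseForming
    (htf : ∀ X : VF, S.Dconn X V = S.fsmulW a (S.incl X) + S.fsmulW (psi X) V) (X Y : VF) :
    S.g (S.conn X (S.tang V)) Y
      = a * S.g X Y + psi X * S.dual (S.tang V) Y + S.gt (S.sff X Y) (S.nor V) := by
  rw [S.g_conn_tang, htf, S.gt_add_left, S.gt_fsmul_left, S.gt_fsmul_left, ← S.g_induced,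
    S.gt_incl_eq_g_tang, RiemannianSetting.dual]

theorem lieg_tang_of_torseForming
    (htf : ∀ X : VF, S.Dconn X V = S.fsmulW a (S.incl X) + S.fsmulW (psi X) V)
    (X Y : VF) (p : M) :
    S.lieg (S.tang V) X Y p
      = 2 * a p * S.g X Y p
        + (psi X p * S.dual (S.tang V) Y p + S.dual (S.tang V) X p * psi Y p)
        + 2 * S.gt (S.sff X Y) (S.nor V) p := by
  have hXY := congrFun (S.g_conn_tang_of_torseForming htf X Y) p
  have hYX := congrFun (S.g_conn_tang_of_torseForming htf Y X) p
  rw [S.g_symm Y X, S.sff_symm Y X] at hYX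
  simp only [Pi.add_apply, Pi.mul_apply] at hXY hYX
  rw [RiemannianSetting.lieg, Pi.add_apply, hXY, hYX]
  ring

end TorseForming

end SubmanifoldSetting

/-- Let `M` be a submanifold isometrically immersed into a
Riemannian manifold `(M̃, g̃)` with induced metric `g` and second fundamental form
`h`, let `V` be a torse-forming vector field on `M̃` (`∇̃_X V = a X + ψ(X) V`), and
let `η` be the `g`-dual `1`-form of the tangential component `V^T` of `V`.  Then
`(M,g)` is an almost `η`-Yamabe soliton `(V^T, λ, μ)` if and only if
`(scal − λ − a) g(X,Y) − g̃(h(X,Y), V^⊥) + μ η(X)η(Y)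
  − (1/2)[ψ(X)η(Y) + η(X)ψ(Y)] = 0` for all `X, Y` tangent to `M`. -/
theorem submanifold_almost_eta_yamabe_soliton_iff
    {n : ℕ} {M VF W : Type} [AddCommGroup VF] [Module ℝ VF]
    [AddCommGroup W] [Module ℝ W]
    (S : SubmanifoldSetting n M VF W) (V : W) (lam mu a : M → ℝ)
    (psi : VF → M → ℝ)
    (htf : ∀ X : VF, S.Dconn X V = S.fsmulW a (S.incl X) + S.fsmulW (psi X) V) :
    S.toRiemannianSetting.IsEtaYamabeSoliton (S.tang V) lam mu
        (S.toRiemannianSetting.dual (S.tang V)) ↔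
      ∀ X Y p,
        (S.scal p - lam p - a p) * S.g X Y p - S.gt (S.sff X Y) (S.nor V) p
          + mu p * S.toRiemannianSetting.dual (S.tang V) X p
              * S.toRiemannianSetting.dual (S.tang V) Y p
          - (1 / 2 : ℝ) * (psi X p * S.toRiemannianSetting.dual (S.tang V) Y p
              + S.toRiemannianSetting.dual (S.tang V) X p * psi Y p) = 0 := by
  simp only [RiemannianSetting.IsEtaYamabeSoliton, funext_iff, Pi.smul_apply, Pi.add_apply,
    Pi.mul_apply, Pi.sub_apply, smul_eq_mul, S.lieg_tang_of_torseForming htf]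
  refine forall₃_congr fun X Y p => ?_
  constructor <;> intro h <;> linarith
end
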